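/- Let β ∈ (0,1), D ≥ 1, and r ∈ (0,1). If [ln((1−r)/r · (1−β)/β)]² ≥ D/(r(1−r)), then the function e(r) = exp(−D·KL(1−r‖β)) satisfies e″(r) ≥ 0 at that point (e is locally convex). -/

import Mathlib

/-!
With `g x = -D · KL(1 - x ‖ β)` one has `g' = D · L` where `L x = log ((1 - x) / x · (1 - β) / β)`,
and `g'' = -D / (x (1 - x))`. Hence `(exp ∘ g)'' = exp g · (D² L² - D / (x (1 - x)))`, and at `r`
the bracket is nonnegative because `D² L² ≥ D³ / (r (1 - r)) ≥ D / (r (1 - r))` for `D ≥ 1`.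
-/

/-- Binary Kullback–Leibler divergence between Bernoulli(p) and Bernoulli(q). -/
noncomputable def klBer (p q : ℝ) : ℝ := p * Real.log (p / q) + (1 - p) * Real.log ((1 - p) / (1 - q))

open Real Set Filter Topology

lemma hasDerivAt_mul_log_div {p q : ℝ} (hp : p ≠ 0) (hq : q ≠ 0) :
    HasDerivAt (fun p => p * log (p / q)) (log (p / q) + 1) p := by
  have hlog : HasDerivAt (fun p => log (p / q)) p⁻¹ p :=
    (((hasDerivAt_id' p).div_const q).log (div_ne_zero hp hq)).congr_deriv (by field_simp)
  exact ((hasDerivAt_id' p).fun_mul hlog).congr_deriv (by field_simp)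

lemma hasDerivAt_klBer_left {p q : ℝ} (hp₀ : p ≠ 0) (hp₁ : p ≠ 1) (hq₀ : q ≠ 0) (hq₁ : q ≠ 1) :
    HasDerivAt (fun p => klBer p q) (log (p / q) - log ((1 - p) / (1 - q))) p := by
  have hcompl := (hasDerivAt_mul_log_div (q := 1 - q) (sub_ne_zero.2 hp₁.symm)
    (sub_ne_zero.2 hq₁.symm)).comp_const_sub 1 p
  exact ((hasDerivAt_mul_log_div hp₀ hq₀).fun_add hcompl).congr_deriv (by ring)

lemma hasDerivAt_klBer_one_sub {x q : ℝ} (hx : x ∈ Ioo (0 : ℝ) 1) (hq : q ∈ Ioo (0 : ℝ) 1) :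
    HasDerivAt (fun x => klBer (1 - x) q) (-log ((1 - x) / x * ((1 - q) / q))) x := by
  obtain ⟨hx₀, hx₁⟩ := hx
  obtain ⟨hq₀, hq₁⟩ := hq
  have hx' : 0 < 1 - x := by linarith
  have hq' : 0 < 1 - q := by linarith
  refine ((hasDerivAt_klBer_left hx'.ne' (by linarith) hq₀.ne' hq₁.ne).comp_const_sub
    1 x).congr_deriv ?_
  rw [sub_sub_cancel, ← log_div (by positivity) (by positivity)]
  congr 2
  field_simp

lemma hasDerivAt_log_one_sub_div_mul {x c : ℝ} (hx : x ∈ Ioo (0 : ℝ) 1) (hc : c ≠ 0) :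
    HasDerivAt (fun x => log ((1 - x) / x * c)) (-(x * (1 - x))⁻¹) x := by
  obtain ⟨hx₀, hx₁⟩ := hx
  have hx' : 1 - x ≠ 0 := by linarith
  have hquot : HasDerivAt (fun y => (1 - y) / y * c) (-c / x ^ 2) x := by
    have := (((hasDerivAt_id' x).const_sub 1).fun_div (hasDerivAt_id' x) hx₀.ne').mul_const c
    exact this.congr_deriv (by field_simp; ring)
  exact (hquot.log (mul_ne_zero (div_ne_zero hx' hx₀.ne') hc)).congr_deriv (by field_simp)

lemma deriv_deriv_exp_comp {g g' : ℝ → ℝ} {g'' x : ℝ}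
    (hg : ∀ᶠ y in 𝓝 x, HasDerivAt g (g' y) y) (hg' : HasDerivAt g' g'' x) :
    deriv (deriv fun y => exp (g y)) x = exp (g x) * (g' x ^ 2 + g'') := by
  have hderiv : deriv (fun y => exp (g y)) =ᶠ[𝓝 x] fun y => exp (g y) * g' y :=
    hg.mono fun y hy => hy.exp.deriv
  rw [hderiv.deriv_eq, (hg.self_of_nhds.exp.fun_mul hg').deriv]
  ring

theorem stmt_8 (β D : ℝ) (hβ : β ∈ Set.Ioo (0:ℝ) 1) (hD : 1 ≤ D)
    (r : ℝ) (hr : r ∈ Set.Ioo (0:ℝ) 1)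
    (hcond : (Real.log ((1 - r) / r * ((1 - β) / β))) ^ 2 ≥ D / (r * (1 - r))) :
    0 ≤ deriv (deriv (fun x => Real.exp (-(D * klBer (1 - x) β)))) r := by
  set L : ℝ → ℝ := fun x => log ((1 - x) / x * ((1 - β) / β))
  have hc : (1 - β) / β ≠ 0 := (div_pos (by linarith [hβ.2]) hβ.1).ne'
  have hg : ∀ᶠ x in 𝓝 r, HasDerivAt (fun x => -(D * klBer (1 - x) β)) (D * L x) x := by
    filter_upwards [isOpen_Ioo.mem_nhds hr] with x hx
    exact ((hasDerivAt_klBer_one_sub hx hβ).const_mul D).fun_neg.congr_deriv (by ring)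
  rw [deriv_deriv_exp_comp hg ((hasDerivAt_log_one_sub_div_mul hr hc).const_mul D)]
  have hrr : 0 < r * (1 - r) := mul_pos hr.1 (by linarith [hr.2])
  have hbracket : D / (r * (1 - r)) ≤ (D * L r) ^ 2 := by
    have hD3 : D ≤ D ^ 3 := le_self_pow₀ hD (by norm_num)
    calc D / (r * (1 - r)) ≤ D ^ 3 / (r * (1 - r)) := by gcongr
      _ = D ^ 2 * (D / (r * (1 - r))) := by ring
      _ ≤ D ^ 2 * L r ^ 2 := by gcongr
      _ = (D * L r) ^ 2 := by ring
  have hnonneg : 0 ≤ (D * L r) ^ 2 + D * -(r * (1 - r))⁻¹ := by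
    rw [mul_neg, ← div_eq_mul_inv]
    linarith
  positivity
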